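/- arXiv:1806.07075 — 9 statements merged into one kernel-verified Lean document; each statement's English description precedes it below -/
import Mathlib

section
/- Let S be a monoid and let r be a Kurosh-Amitsur radical of S-acts. Then the pair (R_r, S_r) consisting of its radical class and its semisimple class is a torsion theory. -/
universe u

/-- A (left) `S`-act: a type equipped with a monoid action of `S`. -/
structure SAct (S : Type u) [Monoid S] where
  carrier : Type u
  [mulAction : MulAction S carrier]

attribute [instance] SAct.mulAction

namespace SAct

variable {S : Type u} [Monoid S]

/-- A homomorphism of `S`-acts. -/
def IsHom (A B : SAct S) (f : A.carrier → B.carrier) : Prop :=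
  ∀ (s : S) (a : A.carrier), f (s • a) = s • f a

/-- A homomorphism is trivial if its image has at most one element. -/
def IsTrivialHom {A B : SAct S} (f : A.carrier → B.carrier) : Prop :=
  (Set.range f).Subsingleton

/-- Two `S`-acts are isomorphic if there is a bijective homomorphism between them. -/
def AreIso (A B : SAct S) : Prop :=
  ∃ f : A.carrier → B.carrier, IsHom A B f ∧ Function.Bijective f

/-- A subset of an `S`-act is a subact if it is closed under the action. -/
def IsSubact (A : SAct S) (B : Set A.carrier) : Prop :=
  ∀ (s : S), ∀ a ∈ B, s • a ∈ B

/-- The `S`-act induced on a subact. -/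
def sub (A : SAct S) (B : Set A.carrier) (h : IsSubact A B) : SAct S where
  carrier := ↥B
  mulAction :=
    { smul := fun s b => ⟨s • (b : A.carrier), h s b b.2⟩
      one_smul := fun b => Subtype.ext (one_smul S (b : A.carrier))
      mul_smul := fun s t b => Subtype.ext (mul_smul s t (b : A.carrier)) }

/-- A congruence on an `S`-act: an equivalence relation compatible with the action. -/
def IsActCon (A : SAct S) (ρ : Setoid A.carrier) : Prop :=
  ∀ (s : S) (a a' : A.carrier), ρ a a' → ρ (s • a) (s • a')

/-- The quotient `S`-act of an `S`-act by a congruence. -/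
def quot (A : SAct S) (ρ : Setoid A.carrier) (h : IsActCon A ρ) : SAct S where
  carrier := Quotient ρ
  mulAction :=
    { smul := fun s => Quotient.map (fun a => s • a) (fun a b hab => h s a b hab)
      one_smul := fun q => Quotient.inductionOn q (fun a => by
        show Quotient.map (fun a => (1 : S) • a) _ (Quotient.mk ρ a) = Quotient.mk ρ a
        rw [Quotient.map_mk, one_smul])
      mul_smul := fun s t q => Quotient.inductionOn q (fun a => by
        show Quotient.map (fun a => (s * t) • a) _ (Quotient.mk ρ a)
            = Quotient.map (fun a => s • a) _ (Quotient.map (fun a => t • a) _ (Quotient.mk ρ a))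
        rw [Quotient.map_mk, Quotient.map_mk, Quotient.map_mk, mul_smul]) }

/-- A system of pairwise disjoint non-trivial subacts of an `S`-act. -/
def IsSystem (A : SAct S) (Sys : Set (Set A.carrier)) : Prop :=
  (∀ B ∈ Sys, IsSubact A B ∧ ¬ B.Subsingleton) ∧
    (∀ B ∈ Sys, ∀ C ∈ Sys, B ≠ C → ∀ a ∈ B, a ∉ C)

/-- The Rees congruence determined by a system of pairwise disjoint
non-trivial subacts: `a` and `b` are related iff `a = b` or `a` and `b`
lie in a common member of the system. -/
def reesSetoid (A : SAct S) (Sys : Set (Set A.carrier)) (hSys : IsSystem A Sys) :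
    Setoid A.carrier where
  r a b := a = b ∨ ∃ B ∈ Sys, a ∈ B ∧ b ∈ B
  iseqv :=
    { refl := fun _ => Or.inl rfl
      symm := by
        rintro a b (rfl | ⟨B, hB, ha, hb⟩)
        · exact Or.inl rfl
        · exact Or.inr ⟨B, hB, hb, ha⟩
      trans := by
        rintro a b c (rfl | ⟨B, hB, ha, hb⟩) h2
        · exact h2
        · rcases h2 with rfl | ⟨C, hC, hb', hc⟩
          · exact Or.inr ⟨B, hB, ha, hb⟩
          · by_cases hBC : B = C
            · exact Or.inr ⟨B, hB, ha, hBC ▸ hc⟩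
            · exact absurd hb' (hSys.2 B hB C hC hBC b hb) }

/-- A Rees congruence is a congruence. -/
theorem reesSetoid_isActCon (A : SAct S) (Sys : Set (Set A.carrier)) (hSys : IsSystem A Sys) :
    IsActCon A (reesSetoid A Sys hSys) := by
  rintro s a a' (rfl | ⟨B, hB, ha, ha'⟩)
  · exact Or.inl rfl
  · exact Or.inr ⟨B, hB, (hSys.1 B hB).1 s a ha, (hSys.1 B hB).1 s a' ha'⟩

/-- The system of non-singleton classes of a congruence (for a Rees congruence,
this is its system `Σ_ρ` of non-trivial subacts). -/
def nsClasses (A : SAct S) (ρ : Setoid A.carrier) : Set (Set A.carrier) :=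
  {C | (∃ a, C = {x | ρ x a}) ∧ ¬ C.Subsingleton}

/-- A congruence is a Rees congruence if it arises from a system of pairwise
disjoint non-trivial subacts. -/
def IsRees (A : SAct S) (ρ : Setoid A.carrier) : Prop :=
  ∃ (Sys : Set (Set A.carrier)) (hSys : IsSystem A Sys), ρ = reesSetoid A Sys hSys

end SAct

open SAct

/-- A (normal) Hoehnke radical: an assignment of a congruence `rad A` to every
`S`-act `A`, functorial with respect to homomorphisms, and with
`rad (A / rad A) = Δ`. -/
structure HoehnkeRadical (S : Type u) [Monoid S] where
  rad : (A : SAct S) → Setoid A.carrier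
  isCon : ∀ A : SAct S, IsActCon A (rad A)
  functorial : ∀ {A B : SAct S} (f : A.carrier → B.carrier), IsHom A B f →
    ∀ a a' : A.carrier, rad A a a' → rad B (f a) (f a')
  rad_quot : ∀ A : SAct S, rad (A.quot (rad A) (isCon A)) = ⊥

namespace HoehnkeRadical

variable {S : Type u} [Monoid S]

/-- The radical class `R_r = {A : r(A) = ∇_A}` of a Hoehnke radical. -/
def radClass (r : HoehnkeRadical S) : Set (SAct S) := {A | r.rad A = ⊤}

/-- The semisimple class `S_r = {A : r(A) = Δ_A}` of a Hoehnke radical. -/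
def ssClass (r : HoehnkeRadical S) : Set (SAct S) := {A | r.rad A = ⊥}

/-- The pointwise order on Hoehnke radicals. -/
def le (r r' : HoehnkeRadical S) : Prop := ∀ A : SAct S, r.rad A ≤ r'.rad A

end HoehnkeRadical

/-- A Kurosh-Amitsur radical: a Hoehnke radical such that (i) every `rad A` is a
Rees congruence, (ii) every member of `Σ_{rad A}` is in the radical class, and
(iii) every system of pairwise disjoint non-trivial subacts belonging to the
radical class is below `Σ_{rad A}`. -/
structure KARadical (S : Type u) [Monoid S] extends HoehnkeRadical S where
  rees : ∀ A : SAct S, IsRees A (rad A)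
  cls_rad : ∀ A : SAct S, ∀ B ∈ nsClasses A (rad A), ∀ h : IsSubact A B,
    A.sub B h ∈ toHoehnkeRadical.radClass
  maximal : ∀ (A : SAct S) (Sys : Set (Set A.carrier)), IsSystem A Sys →
    (∀ B ∈ Sys, ∀ h : IsSubact A B, A.sub B h ∈ toHoehnkeRadical.radClass) →
    ∀ B ∈ Sys, ∃ C ∈ nsClasses A (rad A), B ⊆ C

/-- A torsion theory: a pair `(T, F)` of classes of `S`-acts, each closed under
isomorphism and containing all trivial acts, such that (1) every homomorphism
from a member of `T` to a member of `F` is trivial, (2) `T` contains every act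
all of whose homomorphisms into members of `F` are trivial, and (3) `F`
contains every act all of whose homomorphisms from members of `T` are trivial. -/
structure IsTorsionTheory {S : Type u} [Monoid S] (T F : Set (SAct S)) : Prop where
  iso_T : ∀ A B : SAct S, AreIso A B → A ∈ T → B ∈ T
  iso_F : ∀ A B : SAct S, AreIso A B → A ∈ F → B ∈ F
  trivial_T : ∀ A : SAct S, Subsingleton A.carrier → A ∈ T
  trivial_F : ∀ A : SAct S, Subsingleton A.carrier → A ∈ F
  hom_trivial : ∀ A ∈ T, ∀ B ∈ F, ∀ f : A.carrier → B.carrier,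
    IsHom A B f → IsTrivialHom (A := A) (B := B) f
  mem_T : ∀ A : SAct S,
    (∀ B ∈ F, ∀ f : A.carrier → B.carrier, IsHom A B f → IsTrivialHom (A := A) (B := B) f) →
    A ∈ T
  mem_F : ∀ B : SAct S,
    (∀ A ∈ T, ∀ f : A.carrier → B.carrier, IsHom A B f → IsTrivialHom (A := A) (B := B) f) →
    B ∈ F

/-- The product of a family of `S`-acts. -/
def prodAct {S : Type u} [Monoid S] (ι : Type u) (f : ι → SAct S) : SAct S where
  carrier := ∀ i, (f i).carrier
  mulAction := inferInstance

/-- The Hoehnke radical `r_C` determined by a class `C` closed under subacts and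
products: the meet of all congruences whose quotient lies in `C`. -/
def radC {S : Type u} [Monoid S] (C : Set (SAct S)) (A : SAct S) : Setoid A.carrier :=
  sInf {χ : Setoid A.carrier | ∃ h : IsActCon A χ, A.quot χ h ∈ C}

/-- The radical class `R_{r_C}` of the Hoehnke radical `r_C`. -/
def RradC {S : Type u} [Monoid S] (C : Set (SAct S)) : Set (SAct S) :=
  {A | radC C A = ⊤}

theorem radical_semisimple_pair_is_torsion_theory (S : Type u) [Monoid S]
    (r : KARadical S) :
    IsTorsionTheory r.toHoehnkeRadical.radClass r.toHoehnkeRadical.ssClass := by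
  constructor
  -- iso_T
  · rintro A B ⟨f, hf, hinj, hsurj⟩ hA
    have hAtop : r.rad A = ⊤ := hA
    refine le_antisymm le_top (fun b b' _ => ?_)
    obtain ⟨a, rfl⟩ := hsurj b
    obtain ⟨a', rfl⟩ := hsurj b'
    refine r.functorial f hf a a' ?_
    rw [hAtop]; trivial
  -- iso_F
  · rintro A B ⟨f, hf, hfb⟩ hA
    have hAbot : r.rad A = ⊥ := hA
    obtain ⟨g, hgf, hfg⟩ := Function.bijective_iff_has_inverse.mp hfb
    have hg : IsHom B A g := by
      intro s b
      apply hfb.1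
      rw [hfg, hf, hfg]
    refine le_antisymm (fun b b' hbb' => ?_) bot_le
    have h1 := r.functorial g hg b b' hbb'
    rw [hAbot] at h1
    have heq : g b = g b' := h1
    show b = b'
    rw [← hfg b, ← hfg b', heq]
  -- trivial_T
  · intro A hsub
    refine le_antisymm le_top (fun a b _ => ?_)
    have : a = b := Subsingleton.elim a b
    exact this ▸ (r.rad A).iseqv.refl a
  -- trivial_F
  · intro A hsub
    refine le_antisymm (fun a b _ => ?_) bot_le
    exact (Subsingleton.elim a b : a = b)
  -- hom_trivial
  · intro A hA B hB f hf
    have hAtop : r.rad A = ⊤ := hA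
    have hBbot : r.rad B = ⊥ := hB
    rintro _ ⟨a, rfl⟩ _ ⟨a', rfl⟩
    have h1 : r.rad A a a' := by rw [hAtop]; trivial
    have h2 := r.functorial f hf a a' h1
    rw [hBbot] at h2
    exact h2
  -- mem_T
  · intro A h
    have hQ : A.quot (r.rad A) (r.isCon A) ∈ r.toHoehnkeRadical.ssClass := r.rad_quot A
    have hmk : IsHom A (A.quot (r.rad A) (r.isCon A)) (Quotient.mk (r.rad A)) :=
      fun s a => rfl
    have htriv := h _ hQ _ hmk
    refine le_antisymm le_top (fun a a' _ => ?_)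
    have heq : (Quotient.mk (r.rad A) a :
        (A.quot (r.rad A) (r.isCon A)).carrier) = Quotient.mk (r.rad A) a' :=
      htriv ⟨a, rfl⟩ ⟨a', rfl⟩
    exact Quotient.exact heq
  -- mem_F
  · intro B h
    obtain ⟨Sys, hSys, hρ⟩ := r.rees B
    have hempty : ∀ C ∈ Sys, False := by
      intro C hC
      have hCsub : IsSubact B C := (hSys.1 C hC).1
      have hCnt : ¬ C.Subsingleton := (hSys.1 C hC).2
      rw [Set.not_subsingleton_iff] at hCnt
      obtain ⟨x, hx, y, hy, hxy⟩ := hCnt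
      have hclass : C ∈ nsClasses B (r.rad B) := by
        refine ⟨⟨x, ?_⟩, (hSys.1 C hC).2⟩
        ext z
        constructor
        · intro hz
          show r.rad B z x
          rw [hρ]
          exact Or.inr ⟨C, hC, hz, hx⟩
        · intro hz
          have hz' : r.rad B z x := hz
          rw [hρ] at hz'
          rcases hz' with rfl | ⟨D, hD, hzD, hxD⟩
          · exact hx
          · by_cases hDC : D = C
            · exact hDC ▸ hzD
            · exact absurd hx (hSys.2 D hD C hC hDC x hxD)
      have hrad := r.cls_rad B C hclass hCsub
      have hincl : IsHom (B.sub C hCsub) B Subtype.val := fun s c => rfl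
      have htriv := h _ hrad _ hincl
      exact hxy (htriv ⟨⟨x, hx⟩, rfl⟩ ⟨⟨y, hy⟩, rfl⟩)
    show r.rad B = ⊥
    rw [hρ]
    refine le_antisymm (fun a b hab => ?_) bot_le
    rcases hab with rfl | ⟨C, hC, _, _⟩
    · rfl
    · exact (hempty C hC).elim
end

section
/- Let S be a monoid and let (T, F) be a torsion theory of S-acts. Then there exists a Kurosh-Amitsur radical r of S-acts with radical class R_r = T and semisimple class S_r = F. -/
universe u

open SAct

/-!
The radical of `A` relates `a` and `b` when they are equal or lie in a common subact belonging
to `T`. Everything rests on closure properties of a torsion class, all read off from the fact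
that `A ∈ T` iff every homomorphism from `A` to a member of `F` is constant: `T` is closed under
homomorphic images, under unions of subacts that share a point, and under extensions. Closure
under unions makes the relation transitive, so its non-singleton classes are subacts in `T`,
which gives a Rees congruence with classes in the radical class; closure under extensions shows
that the preimage of a torsion subact of `A / r(A)` is torsion in `A`, i.e. `r(A / r(A)) = Δ`.
-/

namespace SAct

variable {S : Type u} [Monoid S]

theorem IsHom.comp {A B C : SAct S} {g : B.carrier → C.carrier} {f : A.carrier → B.carrier}
    (hg : IsHom B C g) (hf : IsHom A B f) : IsHom A C (g ∘ f) := fun s a =>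
  (congrArg g (hf s a)).trans (hg s (f a))

theorem isHom_val (A : SAct S) {B : Set A.carrier} (hB : IsSubact A B) :
    IsHom (A.sub B hB) A Subtype.val := fun _ _ => rfl

theorem isHom_inclusion (A : SAct S) {B C : Set A.carrier} (hB : IsSubact A B)
    (hC : IsSubact A C) (hBC : B ⊆ C) :
    IsHom (A.sub B hB) (A.sub C hC) (Set.inclusion hBC) := fun _ _ => rfl

theorem isSubact_range {A B : SAct S} {f : A.carrier → B.carrier} (hf : IsHom A B f) :
    IsSubact B (Set.range f) := by
  rintro s _ ⟨a, rfl⟩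
  exact ⟨s • a, hf s a⟩

theorem isHom_rangeFactorization {A B : SAct S} {f : A.carrier → B.carrier} (hf : IsHom A B f) :
    IsHom A (B.sub (Set.range f) (isSubact_range hf)) (Set.rangeFactorization f) :=
  fun s a => Subtype.ext (hf s a)

theorem isRees_of_isSubact (A : SAct S) (ρ : Setoid A.carrier)
    (h : ∀ C ∈ nsClasses A ρ, IsSubact A C) : IsRees A ρ := by
  have hSys : IsSystem A (nsClasses A ρ) := by
    refine ⟨fun C hC => ⟨h C hC, hC.2⟩, ?_⟩
    rintro _ ⟨⟨a, rfl⟩, -⟩ _ ⟨⟨b, rfl⟩, -⟩ hne x hxa hxb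
    refine hne (Set.ext fun z => ?_)
    exact ⟨fun hz => ρ.trans hz (ρ.trans (ρ.symm hxa) hxb),
      fun hz => ρ.trans hz (ρ.trans (ρ.symm hxb) hxa)⟩
  refine ⟨_, hSys, Setoid.ext fun a b => ⟨fun hab => ?_, ?_⟩⟩
  · by_cases heq : a = b
    · exact Or.inl heq
    · exact Or.inr ⟨{x | ρ x b}, ⟨⟨b, rfl⟩, fun hs => heq (hs hab (ρ.refl b))⟩, hab, ρ.refl b⟩
  · rintro (rfl | ⟨_, ⟨⟨c, rfl⟩, -⟩, hac, hbc⟩)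
    · exact ρ.refl a
    · exact ρ.trans hac (ρ.symm hbc)

end SAct

variable {S : Type u} [Monoid S]

def IsTorsionSubact (T : Set (SAct S)) (A : SAct S) (B : Set A.carrier) : Prop :=
  ∃ h : IsSubact A B, A.sub B h ∈ T

namespace IsTorsionTheory

variable {T F : Set (SAct S)}

theorem apply_eq (htt : IsTorsionTheory T F) {A D : SAct S} (hA : A ∈ T) (hD : D ∈ F)
    {f : A.carrier → D.carrier} (hf : IsHom A D f) (x y : A.carrier) : f x = f y :=
  htt.hom_trivial A hA D hD f hf ⟨x, rfl⟩ ⟨y, rfl⟩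

theorem mem_T_of_forall_apply_eq (htt : IsTorsionTheory T F) {A : SAct S}
    (h : ∀ D ∈ F, ∀ f : A.carrier → D.carrier, IsHom A D f → ∀ x y, f x = f y) : A ∈ T :=
  htt.mem_T A fun D hD f hf => by
    rintro _ ⟨x, rfl⟩ _ ⟨y, rfl⟩
    exact h D hD f hf x y

theorem mem_T_of_surjective (htt : IsTorsionTheory T F) {A B : SAct S}
    {g : A.carrier → B.carrier} (hg : IsHom A B g) (hsurj : Function.Surjective g)
    (hA : A ∈ T) : B ∈ T :=
  htt.mem_T_of_forall_apply_eq fun _ hD _ hf =>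
    hsurj.forall₂.2 (htt.apply_eq hA hD (hf.comp hg))

/-- Closure of `T` under extensions: `A` is in `T` as soon as it maps onto a member of `T`
by a homomorphism whose fibres no homomorphism into `F` can separate. -/
theorem mem_T_of_extension (htt : IsTorsionTheory T F) {A B : SAct S}
    {g : A.carrier → B.carrier} (hg : IsHom A B g) (hsurj : Function.Surjective g)
    (hB : B ∈ T)
    (hfib : ∀ D ∈ F, ∀ f : A.carrier → D.carrier, IsHom A D f → ∀ x y, g x = g y → f x = f y) :
    A ∈ T := by
  refine htt.mem_T_of_forall_apply_eq fun D hD f hf x y => ?_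
  set h : B.carrier → D.carrier := f ∘ Function.surjInv hsurj
  have hfh : ∀ a, f a = h (g a) := fun a =>
    hfib D hD f hf _ _ (Function.surjInv_eq hsurj (g a)).symm
  have hh : IsHom B D h := fun s b => by
    simp only [h, Function.comp_apply]
    rw [← hf s]
    exact hfib D hD f hf _ _ (by rw [hg, Function.surjInv_eq hsurj, Function.surjInv_eq hsurj])
  rw [hfh x, hfh y]
  exact htt.apply_eq hB hD hh _ _

theorem apply_eq_of_mem_of_isTorsionSubact (htt : IsTorsionTheory T F) {A D : SAct S}
    (hD : D ∈ F) {C : Set A.carrier} (hC : IsSubact A C) {f : (A.sub C hC).carrier → D.carrier}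
    (hf : IsHom (A.sub C hC) D f) {K : Set A.carrier} (hK : IsTorsionSubact T A K) (hKC : K ⊆ C)
    {x y : (A.sub C hC).carrier} (hx : x.1 ∈ K) (hy : y.1 ∈ K) : f x = f y :=
  htt.apply_eq hK.2 hD (hf.comp (isHom_inclusion A hK.1 hC hKC)) ⟨x.1, hx⟩ ⟨y.1, hy⟩

theorem isTorsionSubact_of_forall (htt : IsTorsionTheory T F) {A : SAct S} {C : Set A.carrier}
    (hC : IsSubact A C) {c : A.carrier} (hc : c ∈ C)
    (h : ∀ x ∈ C, ∃ K ⊆ C, IsTorsionSubact T A K ∧ x ∈ K ∧ c ∈ K) :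
    IsTorsionSubact T A C := by
  refine ⟨hC, htt.mem_T_of_forall_apply_eq fun D hD f hf => ?_⟩
  have hconst : ∀ x, f x = f ⟨c, hc⟩ := fun x => by
    obtain ⟨K, hKC, hK, hxK, hcK⟩ := h x.1 x.2
    exact htt.apply_eq_of_mem_of_isTorsionSubact hD hC hf hK hKC hxK hcK
  exact fun x y => (hconst x).trans (hconst y).symm

theorem isTorsionSubact_union (htt : IsTorsionTheory T F) {A : SAct S} {B B' : Set A.carrier}
    (hB : IsTorsionSubact T A B) (hB' : IsTorsionSubact T A B') {b : A.carrier} (hb : b ∈ B)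
    (hb' : b ∈ B') : IsTorsionSubact T A (B ∪ B') := by
  refine htt.isTorsionSubact_of_forall (fun s x hx => hx.imp (hB.1 s x) (hB'.1 s x))
    (Or.inl hb) ?_
  rintro x (hx | hx)
  · exact ⟨B, Set.subset_union_left, hB, hx, hb⟩
  · exact ⟨B', Set.subset_union_right, hB', hx, hb'⟩

theorem isTorsionSubact_range (htt : IsTorsionTheory T F) {A B : SAct S} (hA : A ∈ T)
    {f : A.carrier → B.carrier} (hf : IsHom A B f) : IsTorsionSubact T B (Set.range f) :=
  ⟨isSubact_range hf, htt.mem_T_of_surjective (isHom_rangeFactorization hf)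
    Set.rangeFactorization_surjective hA⟩

theorem isTorsionSubact_univ_iff (htt : IsTorsionTheory T F) {A : SAct S} :
    IsTorsionSubact T A Set.univ ↔ A ∈ T := by
  refine ⟨fun ⟨h, hT⟩ => htt.mem_T_of_surjective (isHom_val A h)
    (fun a => ⟨⟨a, trivial⟩, rfl⟩) hT, fun hA => ?_⟩
  rw [← Set.range_id]
  exact htt.isTorsionSubact_range hA (fun _ _ => rfl)

def torsionCon (htt : IsTorsionTheory T F) (A : SAct S) : Setoid A.carrier where
  r a b := a = b ∨ ∃ K, IsTorsionSubact T A K ∧ a ∈ K ∧ b ∈ K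
  iseqv :=
    { refl := fun _ => Or.inl rfl
      symm := by
        rintro a b (rfl | ⟨K, hK, ha, hb⟩)
        · exact Or.inl rfl
        · exact Or.inr ⟨K, hK, hb, ha⟩
      trans := by
        rintro a b c (rfl | ⟨B, hB, ha, hb⟩) (rfl | ⟨B', hB', hb', hc⟩)
        · exact Or.inl rfl
        · exact Or.inr ⟨B', hB', hb', hc⟩
        · exact Or.inr ⟨B, hB, ha, hb⟩
        · exact Or.inr ⟨B ∪ B', htt.isTorsionSubact_union hB hB' hb hb', Or.inl ha, Or.inr hc⟩ }

theorem isActCon_torsionCon (htt : IsTorsionTheory T F) (A : SAct S) :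
    IsActCon A (htt.torsionCon A) := by
  rintro s a b (rfl | ⟨K, hK, ha, hb⟩)
  · exact Or.inl rfl
  · exact Or.inr ⟨K, hK, hK.1 s a ha, hK.1 s b hb⟩

theorem subset_torsionCon_class (htt : IsTorsionTheory T F) {A : SAct S} {K : Set A.carrier}
    (hK : IsTorsionSubact T A K) {a : A.carrier} (ha : a ∈ K) :
    K ⊆ {x | htt.torsionCon A x a} :=
  fun _ hx => Or.inr ⟨K, hK, hx, ha⟩

theorem isTorsionSubact_of_mem_nsClasses (htt : IsTorsionTheory T F) {A : SAct S}
    {C : Set A.carrier} (hC : C ∈ nsClasses A (htt.torsionCon A)) : IsTorsionSubact T A C := by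
  obtain ⟨⟨a, rfl⟩, hne⟩ := hC
  obtain ⟨K₀, hK₀, haK₀⟩ : ∃ K, IsTorsionSubact T A K ∧ a ∈ K := by
    obtain ⟨x, hx, y, hy, hxy⟩ := Set.not_subsingleton_iff.1 hne
    obtain ⟨z, hz, hza⟩ : ∃ z, htt.torsionCon A z a ∧ z ≠ a := by
      by_cases hxa : x = a
      · exact ⟨y, hy, fun hya => hxy (hxa.trans hya.symm)⟩
      · exact ⟨x, hx, hxa⟩
    obtain rfl | ⟨K, hK, -, haK⟩ := hz
    · exact absurd rfl hza
    · exact ⟨K, hK, haK⟩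
  have hsub : IsSubact A {x | htt.torsionCon A x a} := fun s z hz =>
    (htt.torsionCon A).trans (htt.isActCon_torsionCon A s z a hz)
      (Or.inr ⟨K₀, hK₀, hK₀.1 s a haK₀, haK₀⟩)
  refine htt.isTorsionSubact_of_forall hsub (Or.inl rfl) ?_
  rintro x (rfl | ⟨K, hK, hxK, haK⟩)
  · exact ⟨K₀, htt.subset_torsionCon_class hK₀ haK₀, hK₀, haK₀, haK₀⟩
  · exact ⟨K, htt.subset_torsionCon_class hK haK, hK, hxK, haK⟩

theorem torsionCon_eq_top_iff (htt : IsTorsionTheory T F) {A : SAct S} :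
    htt.torsionCon A = ⊤ ↔ A ∈ T := by
  refine ⟨fun h => ?_, fun hA => Setoid.ext fun a b =>
    ⟨fun _ => trivial, fun _ => Or.inr ⟨_, htt.isTorsionSubact_univ_iff.2 hA, trivial, trivial⟩⟩⟩
  rcases subsingleton_or_nontrivial A.carrier with hA | ⟨a, b, hab⟩
  · exact htt.trivial_T A hA
  have hclass : {x | htt.torsionCon A x a} = Set.univ :=
    Set.eq_univ_of_forall fun x => by rw [h]; trivial
  have hne : ¬ {x | htt.torsionCon A x a}.Subsingleton := by
    rw [hclass]
    exact fun hs => hab (hs trivial trivial)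
  have hT := htt.isTorsionSubact_of_mem_nsClasses ⟨⟨a, rfl⟩, hne⟩
  rwa [hclass, htt.isTorsionSubact_univ_iff] at hT

theorem torsionCon_eq_bot_iff (htt : IsTorsionTheory T F) {A : SAct S} :
    htt.torsionCon A = ⊥ ↔ A ∈ F := by
  refine ⟨fun h => htt.mem_F A fun K hK f hf => ?_, fun hA => Setoid.ext fun a b => ?_⟩
  · rintro _ ⟨x, rfl⟩ _ ⟨y, rfl⟩
    have hxy : htt.torsionCon A (f x) (f y) :=
      Or.inr ⟨_, htt.isTorsionSubact_range hK hf, ⟨x, rfl⟩, ⟨y, rfl⟩⟩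
    rwa [h] at hxy
  · rw [Setoid.bot_def]
    refine ⟨?_, fun hab => Or.inl hab⟩
    rintro (rfl | ⟨K, hK, ha, hb⟩)
    · rfl
    · exact htt.apply_eq hK.2 hA (isHom_val A hK.1) ⟨a, ha⟩ ⟨b, hb⟩

theorem isTorsionSubact_preimage_mk (htt : IsTorsionTheory T F) {A : SAct S}
    {K : Set (Quotient (htt.torsionCon A))}
    (hK : IsTorsionSubact T (A.quot _ (htt.isActCon_torsionCon A)) K) :
    IsTorsionSubact T A (Quotient.mk _ ⁻¹' K) := by
  obtain ⟨hKs, hKT⟩ := hK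
  have hP : IsSubact A (Quotient.mk _ ⁻¹' K) := fun s x hx => hKs s _ hx
  let g : (A.sub _ hP).carrier → ((A.quot _ (htt.isActCon_torsionCon A)).sub K hKs).carrier :=
    fun x => ⟨_, x.2⟩
  have hg : IsHom _ _ g := fun _ _ => rfl
  have hsurj : Function.Surjective g := by
    rintro ⟨q, hq⟩
    obtain ⟨a, rfl⟩ := Quotient.exists_rep q
    exact ⟨⟨a, hq⟩, rfl⟩
  refine ⟨hP, htt.mem_T_of_extension hg hsurj hKT fun D hD f hf x y hxy => ?_⟩
  obtain h | ⟨K', hK', hx, hy⟩ := Quotient.exact (congrArg Subtype.val hxy)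
  · exact congrArg f (Subtype.ext h)
  refine htt.apply_eq_of_mem_of_isTorsionSubact hD hP hf hK' (fun z hz => ?_) hx hy
  show Quotient.mk _ z ∈ K
  rw [Quotient.sound (Or.inr ⟨K', hK', hz, hx⟩ : htt.torsionCon A z x.1)]
  exact x.2

theorem torsionCon_quot (htt : IsTorsionTheory T F) (A : SAct S) :
    htt.torsionCon (A.quot _ (htt.isActCon_torsionCon A)) = ⊥ := by
  refine Setoid.ext fun q₁ q₂ => ?_
  rw [Setoid.bot_def]
  refine ⟨?_, fun h => Or.inl h⟩
  rintro (rfl | ⟨K, hK, h₁, h₂⟩)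
  · rfl
  obtain ⟨x, rfl⟩ := Quotient.exists_rep q₁
  obtain ⟨y, rfl⟩ := Quotient.exists_rep q₂
  exact Quotient.sound (Or.inr ⟨_, htt.isTorsionSubact_preimage_mk hK, h₁, h₂⟩)

def radical (htt : IsTorsionTheory T F) : HoehnkeRadical S where
  rad := htt.torsionCon
  isCon := htt.isActCon_torsionCon
  functorial f hf := by
    rintro a a' (rfl | ⟨K, hK, ha, ha'⟩)
    · exact Or.inl rfl
    · refine Or.inr ⟨_, htt.isTorsionSubact_range hK.2 (hf.comp (isHom_val _ hK.1)),
        ⟨⟨a, ha⟩, rfl⟩, ⟨⟨a', ha'⟩, rfl⟩⟩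
  rad_quot := htt.torsionCon_quot

theorem radClass_radical (htt : IsTorsionTheory T F) : htt.radical.radClass = T :=
  Set.ext fun _ => htt.torsionCon_eq_top_iff

theorem ssClass_radical (htt : IsTorsionTheory T F) : htt.radical.ssClass = F :=
  Set.ext fun _ => htt.torsionCon_eq_bot_iff

def kaRadical (htt : IsTorsionTheory T F) : KARadical S where
  toHoehnkeRadical := htt.radical
  rees A := isRees_of_isSubact A _ fun _ hC => (htt.isTorsionSubact_of_mem_nsClasses hC).1
  cls_rad _ _ hB _ := htt.torsionCon_eq_top_iff.2 (htt.isTorsionSubact_of_mem_nsClasses hB).2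
  maximal A Sys hSys hrad B hB := by
    obtain ⟨hBs, hne⟩ := hSys.1 B hB
    have hBT : IsTorsionSubact T A B := ⟨hBs, htt.torsionCon_eq_top_iff.1 (hrad B hB hBs)⟩
    obtain ⟨a, ha, b, hb, hab⟩ := Set.not_subsingleton_iff.1 hne
    have hBa := htt.subset_torsionCon_class hBT ha
    exact ⟨_, ⟨⟨a, rfl⟩, fun hs => hab (hs (hBa ha) (hBa hb))⟩, hBa⟩

end IsTorsionTheory

theorem torsion_theory_gives_KA_radical (S : Type u) [Monoid S]
    (T F : Set (SAct S)) (htt : IsTorsionTheory T F) :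
    ∃ r : KARadical S,
      r.toHoehnkeRadical.radClass = T ∧ r.toHoehnkeRadical.ssClass = F :=
  ⟨htt.kaRadical, htt.radClass_radical, htt.ssClass_radical⟩
end

section
/- Let S be a monoid and let r be a Kurosh-Amitsur radical of S-acts. Then the pair (R_r, S_r) satisfies conditions (1)–(4): (1) R_r ∩ S_r consists of trivial S-acts; (2) R_r is homomorphically closed; (3) S_r is closed under subacts; (4) every S-act A admits a system Σ of pairwise disjoint non-trivial subacts all belonging to R_r such that the Rees factor A/ρ_Σ belongs to S_r. -/
universe u

open SAct

/-!
Condition (1) holds because `∇_A = Δ_A` forces `A` to be trivial. Conditions (2) and (3) need only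
the functoriality of a Hoehnke radical: applied to a surjection it spreads `∇` from the domain onto
the image, and applied to the inclusion of a subact it pulls `Δ` back from the ambient act. For (4)
take `Σ = Σ_{r(A)}`: its members are radical by the Kurosh–Amitsur axioms, and
`A / ρ_Σ = A / r(A)` is semisimple.
-/

namespace HoehnkeRadical

variable {S : Type u} [Monoid S] (r : HoehnkeRadical S)

theorem subsingleton_of_mem_radClass_of_mem_ssClass {A : SAct S} (hR : A ∈ r.radClass)
    (hS : A ∈ r.ssClass) : Subsingleton A.carrier :=
  ⟨fun a b => by
    have hab : r.rad A a b := Setoid.eq_top_iff.mp hR a b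
    rwa [hS] at hab⟩

theorem mem_radClass_of_surjective {A B : SAct S} (hA : A ∈ r.radClass)
    {f : A.carrier → B.carrier} (hf : IsHom A B f) (hsurj : Function.Surjective f) :
    B ∈ r.radClass := by
  refine Setoid.eq_top_iff.mpr fun b b' => ?_
  obtain ⟨a, rfl⟩ := hsurj b
  obtain ⟨a', rfl⟩ := hsurj b'
  exact r.functorial f hf a a' (Setoid.eq_top_iff.mp hA a a')

theorem sub_mem_ssClass {A : SAct S} (hA : A ∈ r.ssClass) (B : Set A.carrier)
    (h : IsSubact A B) : A.sub B h ∈ r.ssClass := by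
  refine le_bot_iff.mp fun b b' hbb' => Subtype.ext ?_
  have hval : IsHom (A.sub B h) A Subtype.val := fun _ _ => rfl
  have := r.functorial _ hval b b' hbb'
  rwa [hA] at this

theorem quot_mem_ssClass {A : SAct S} {ρ : Setoid A.carrier} (hρ : IsActCon A ρ)
    (h : ρ = r.rad A) : A.quot ρ hρ ∈ r.ssClass := by
  subst h
  exact r.rad_quot A

end HoehnkeRadical

namespace SAct

variable {S : Type u} [Monoid S]

theorem reesSetoid_class_eq {A : SAct S} {Sys : Set (Set A.carrier)} (hSys : IsSystem A Sys)
    {B : Set A.carrier} (hB : B ∈ Sys) {a : A.carrier} (ha : a ∈ B) :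
    {x | reesSetoid A Sys hSys x a} = B := by
  ext x
  refine ⟨?_, fun hx => Or.inr ⟨B, hB, hx, ha⟩⟩
  rintro (rfl | ⟨C, hC, hx, haC⟩)
  · exact ha
  · by_contra hxB
    exact hSys.2 B hB C hC (by rintro rfl; exact hxB hx) a ha haC

theorem mem_nsClasses_reesSetoid {A : SAct S} {Sys : Set (Set A.carrier)}
    (hSys : IsSystem A Sys) {B : Set A.carrier} (hB : B ∈ Sys) :
    B ∈ nsClasses A (reesSetoid A Sys hSys) := by
  obtain ⟨a, ha⟩ := (Set.not_subsingleton_iff.mp (hSys.1 B hB).2).nonempty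
  exact ⟨⟨a, (reesSetoid_class_eq hSys hB ha).symm⟩, (hSys.1 B hB).2⟩

end SAct

theorem KARadical.exists_system_radClass_quot_mem_ssClass {S : Type u} [Monoid S]
    (r : KARadical S) (A : SAct S) :
    ∃ (Sys : Set (Set A.carrier)) (hSys : IsSystem A Sys),
      (∀ B ∈ Sys, ∀ h : IsSubact A B, A.sub B h ∈ r.radClass) ∧
      A.quot (reesSetoid A Sys hSys) (reesSetoid_isActCon A Sys hSys) ∈ r.ssClass := by
  obtain ⟨Sys, hSys, hρ⟩ := r.rees A
  refine ⟨Sys, hSys, fun B hB h => r.cls_rad A B ?_ h, r.quot_mem_ssClass _ hρ.symm⟩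
  rw [hρ]
  exact mem_nsClasses_reesSetoid hSys hB

theorem KA_radical_pair_conditions (S : Type u) [Monoid S] (r : KARadical S) :
    (∀ A : SAct S, A ∈ r.toHoehnkeRadical.radClass → A ∈ r.toHoehnkeRadical.ssClass →
      Subsingleton A.carrier) ∧
    (∀ A ∈ r.toHoehnkeRadical.radClass, ∀ B : SAct S, ∀ f : A.carrier → B.carrier,
      IsHom A B f → Function.Surjective f → B ∈ r.toHoehnkeRadical.radClass) ∧
    (∀ A ∈ r.toHoehnkeRadical.ssClass, ∀ (B : Set A.carrier) (h : IsSubact A B),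
      A.sub B h ∈ r.toHoehnkeRadical.ssClass) ∧
    (∀ A : SAct S, ∃ (Sys : Set (Set A.carrier)) (hSys : IsSystem A Sys),
      (∀ B ∈ Sys, ∀ h : IsSubact A B, A.sub B h ∈ r.toHoehnkeRadical.radClass) ∧
      A.quot (reesSetoid A Sys hSys) (reesSetoid_isActCon A Sys hSys) ∈
        r.toHoehnkeRadical.ssClass) := by
  exact ⟨fun A hR hS => r.subsingleton_of_mem_radClass_of_mem_ssClass hR hS,
    fun A hA B f hf hsurj => r.mem_radClass_of_surjective hA hf hsurj,
    fun A hA B h => r.sub_mem_ssClass hA B h,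
    r.exists_system_radClass_quot_mem_ssClass⟩
end

section
/- Let S be a monoid and let (R, S) be a pair of classes of S-acts, each closed under isomorphism and containing all trivial acts, satisfying: (1) R ∩ S consists of trivial S-acts; (2) R is homomorphically closed; (3) S is closed under subacts; (4) every S-act A admits a system Σ of pairwise disjoint non-trivial subacts all belonging to R such that the Rees factor A/ρ_Σ belongs to S. Then there exists a Kurosh-Amitsur radical r with radical class R_r = R and semisimple class S_r = S. -/
universe u

open SAct

section KAConstruction

open SAct

variable {S : Type u} [Monoid S] {R Sc : Set (SAct S)}

/-- Hypothesis (4): every act admits a system of disjoint nontrivial `R`-subacts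
with Rees factor in `Sc`. -/
def H4 (R Sc : Set (SAct S)) : Prop :=
  ∀ A : SAct S, ∃ (Sys : Set (Set A.carrier)) (hSys : IsSystem A Sys),
    (∀ B ∈ Sys, ∀ h : IsSubact A B, A.sub B h ∈ R) ∧
    A.quot (reesSetoid A Sys hSys) (reesSetoid_isActCon A Sys hSys) ∈ Sc

noncomputable def sysOf (h4 : H4 R Sc) (A : SAct S) : Set (Set A.carrier) :=
  (h4 A).choose

theorem sysOf_isSystem (h4 : H4 R Sc) (A : SAct S) : IsSystem A (sysOf h4 A) :=
  (h4 A).choose_spec.choose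

theorem sysOf_memR (h4 : H4 R Sc) (A : SAct S) :
    ∀ B ∈ sysOf h4 A, ∀ h : IsSubact A B, A.sub B h ∈ R :=
  (h4 A).choose_spec.choose_spec.1

noncomputable def radS (h4 : H4 R Sc) (A : SAct S) : Setoid A.carrier :=
  reesSetoid A (sysOf h4 A) (sysOf_isSystem h4 A)

theorem radS_isCon (h4 : H4 R Sc) (A : SAct S) : IsActCon A (radS h4 A) :=
  reesSetoid_isActCon A (sysOf h4 A) (sysOf_isSystem h4 A)

theorem sysOf_quot (h4 : H4 R Sc) (A : SAct S) :
    A.quot (radS h4 A) (radS_isCon h4 A) ∈ Sc :=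
  (h4 A).choose_spec.choose_spec.2

theorem radS_iff (h4 : H4 R Sc) (A : SAct S) (a b : A.carrier) :
    radS h4 A a b ↔ a = b ∨ ∃ B ∈ sysOf h4 A, a ∈ B ∧ b ∈ B := Iff.rfl

/-- Two members of a system containing a common point are equal. -/
theorem system_eq_of_mem {A : SAct S} {Sys : Set (Set A.carrier)} (hSys : IsSystem A Sys)
    {B C : Set A.carrier} (hB : B ∈ Sys) (hC : C ∈ Sys) {a : A.carrier}
    (haB : a ∈ B) (haC : a ∈ C) : B = C := by
  by_contra hne
  exact hSys.2 B hB C hC hne a haB haC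

theorem quot_mk_isHom (A : SAct S) (ρ : Setoid A.carrier) (h : IsActCon A ρ) :
    IsHom A (A.quot ρ h) (Quotient.mk ρ) := fun s a => rfl

theorem image_isSubact {A B : SAct S} {f : A.carrier → B.carrier} (hf : IsHom A B f)
    {D : Set A.carrier} (hD : IsSubact A D) : IsSubact B (f '' D) := by
  rintro s _ ⟨a, ha, rfl⟩
  exact ⟨s • a, hD s a ha, hf s a⟩

/-- The image of an `R`-subact under a homomorphism is an `R`-subact. -/
theorem image_memR (h2 : ∀ A ∈ R, ∀ B : SAct S, ∀ f : A.carrier → B.carrier,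
      IsHom A B f → Function.Surjective f → B ∈ R)
    {A B : SAct S} {f : A.carrier → B.carrier} (hf : IsHom A B f)
    {D : Set A.carrier} (hD : IsSubact A D) (hDR : A.sub D hD ∈ R) :
    B.sub (f '' D) (image_isSubact hf hD) ∈ R := by
  refine h2 _ hDR _ (fun d => ⟨f d.1, ⟨d.1, d.2, rfl⟩⟩) (fun s d => Subtype.ext (hf s d.1)) ?_
  rintro ⟨_, a, ha, rfl⟩
  exact ⟨⟨a, ha⟩, rfl⟩

/-- Key lemma: every non-trivial `R`-subact is contained in a member of the
canonical system. -/
theorem subset_sysOf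
    (h1 : ∀ A : SAct S, A ∈ R → A ∈ Sc → Subsingleton A.carrier)
    (h2 : ∀ A ∈ R, ∀ B : SAct S, ∀ f : A.carrier → B.carrier,
      IsHom A B f → Function.Surjective f → B ∈ R)
    (h3 : ∀ A ∈ Sc, ∀ (B : Set A.carrier) (h : IsSubact A B), A.sub B h ∈ Sc)
    (h4 : H4 R Sc) (A : SAct S) {B : Set A.carrier} (hB : IsSubact A B)
    (hBnt : ¬ B.Subsingleton) (hBR : A.sub B hB ∈ R) :
    ∃ C ∈ sysOf h4 A, B ⊆ C := by
  set ρ := radS h4 A with hρ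
  set Q := A.quot ρ (radS_isCon h4 A) with hQ
  have himg : IsSubact Q (Quotient.mk ρ '' B) :=
    image_isSubact (quot_mk_isHom A ρ (radS_isCon h4 A)) hB
  have hR' : Q.sub (Quotient.mk ρ '' B) himg ∈ R :=
    image_memR h2 (quot_mk_isHom A ρ (radS_isCon h4 A)) hB hBR
  have hS' : Q.sub (Quotient.mk ρ '' B) himg ∈ Sc :=
    h3 Q (sysOf_quot h4 A) _ himg
  have hsub : Subsingleton (Q.sub (Quotient.mk ρ '' B) himg).carrier := h1 _ hR' hS'
  have hconst : ∀ x ∈ B, ∀ y ∈ B, Quotient.mk ρ x = Quotient.mk ρ y := by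
    intro x hx y hy
    have := @Subsingleton.elim _ hsub ⟨Quotient.mk ρ x, ⟨x, hx, rfl⟩⟩
      ⟨Quotient.mk ρ y, ⟨y, hy, rfl⟩⟩
    exact congrArg Subtype.val this
  obtain ⟨a, ha, b, hb, hab⟩ := Set.not_subsingleton_iff.mp hBnt
  have hrel : ρ a b := Quotient.exact (hconst a ha b hb)
  rcases hrel with h | ⟨C, hC, haC, hbC⟩
  · exact absurd h hab
  refine ⟨C, hC, fun x hx => ?_⟩
  have : ρ x a := Quotient.exact (hconst x hx a ha)
  rcases this with rfl | ⟨C', hC', hxC', haC'⟩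
  · exact haC
  · rwa [system_eq_of_mem (sysOf_isSystem h4 A) hC' hC haC' haC] at hxC'

theorem radS_eq_top_of_memR
    (h1 : ∀ A : SAct S, A ∈ R → A ∈ Sc → Subsingleton A.carrier)
    (h2 : ∀ A ∈ R, ∀ B : SAct S, ∀ f : A.carrier → B.carrier,
      IsHom A B f → Function.Surjective f → B ∈ R)
    (h4 : H4 R Sc) {A : SAct S} (hA : A ∈ R) : radS h4 A = ⊤ := by
  have hQR : A.quot (radS h4 A) (radS_isCon h4 A) ∈ R := by
    refine h2 A hA _ (Quotient.mk _) (quot_mk_isHom A _ _) ?_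
    exact fun q => Quotient.inductionOn q (fun a => ⟨a, rfl⟩)
  have hsub : Subsingleton (A.quot (radS h4 A) (radS_isCon h4 A)).carrier :=
    h1 _ hQR (sysOf_quot h4 A)
  refine Setoid.ext fun a b => ⟨fun _ => trivial, fun _ => ?_⟩
  exact Quotient.exact (@Subsingleton.elim _ hsub (Quotient.mk _ a) (Quotient.mk _ b))

theorem memR_of_radS_eq_top
    (hRiso : ∀ A B : SAct S, AreIso A B → A ∈ R → B ∈ R)
    (hRtriv : ∀ A : SAct S, Subsingleton A.carrier → A ∈ R)
    (h4 : H4 R Sc) {A : SAct S} (hA : radS h4 A = ⊤) : A ∈ R := by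
  by_cases hs : Subsingleton A.carrier
  · exact hRtriv A hs
  · rw [not_subsingleton_iff_nontrivial] at hs
    obtain ⟨a, b, hab⟩ := hs
    have hrel : radS h4 A a b := by rw [hA]; trivial
    rcases hrel with h | ⟨C, hC, haC, hbC⟩
    · exact absurd h hab
    have hCuniv : C = Set.univ := by
      refine Set.eq_univ_of_forall fun x => ?_
      have hrel : radS h4 A x a := by rw [hA]; trivial
      rcases hrel with rfl | ⟨C', hC', hxC', haC'⟩
      · exact haC
      · rwa [system_eq_of_mem (sysOf_isSystem h4 A) hC' hC haC' haC] at hxC'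
    have hsubact : IsSubact A C := ((sysOf_isSystem h4 A).1 C hC).1
    exact hRiso (A.sub C hsubact) A ⟨Subtype.val, fun s a => rfl, Subtype.val_injective,
      fun a => ⟨⟨a, hCuniv.symm ▸ Set.mem_univ a⟩, rfl⟩⟩ (sysOf_memR h4 A C hC hsubact)

theorem sysOf_eq_empty_of_memSc
    (h1 : ∀ A : SAct S, A ∈ R → A ∈ Sc → Subsingleton A.carrier)
    (h3 : ∀ A ∈ Sc, ∀ (B : Set A.carrier) (h : IsSubact A B), A.sub B h ∈ Sc)
    (h4 : H4 R Sc) {A : SAct S} (hA : A ∈ Sc) : sysOf h4 A = ∅ := by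
  rw [Set.eq_empty_iff_forall_notMem]
  intro B hB
  have hsys := sysOf_isSystem h4 A
  have hsubact := (hsys.1 B hB).1
  have hnt := (hsys.1 B hB).2
  have hR : A.sub B hsubact ∈ R := sysOf_memR h4 A B hB hsubact
  have hS : A.sub B hsubact ∈ Sc := h3 A hA B hsubact
  exact hnt ((Set.subsingleton_coe B).mp (h1 _ hR hS))

theorem radS_eq_bot_of_memSc
    (h1 : ∀ A : SAct S, A ∈ R → A ∈ Sc → Subsingleton A.carrier)
    (h3 : ∀ A ∈ Sc, ∀ (B : Set A.carrier) (h : IsSubact A B), A.sub B h ∈ Sc)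
    (h4 : H4 R Sc) {A : SAct S} (hA : A ∈ Sc) : radS h4 A = ⊥ := by
  have hempty := sysOf_eq_empty_of_memSc h1 h3 h4 hA
  refine Setoid.ext fun a b => ⟨fun h => ?_, fun h => Or.inl h⟩
  rcases h with h | ⟨C, hC, _, _⟩
  · exact h
  · rw [hempty] at hC; exact absurd hC (Set.notMem_empty C)

theorem memSc_of_radS_eq_bot
    (hSiso : ∀ A B : SAct S, AreIso A B → A ∈ Sc → B ∈ Sc)
    (h4 : H4 R Sc) {A : SAct S} (hA : radS h4 A = ⊥) : A ∈ Sc := by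
  refine hSiso (A.quot (radS h4 A) (radS_isCon h4 A)) A ?_ (sysOf_quot h4 A)
  refine ⟨Quotient.lift id (fun a b hab => by rw [hA] at hab; exact hab), ?_, ?_, ?_⟩
  · intro s q
    exact Quotient.inductionOn q (fun a => rfl)
  · intro q q'
    refine Quotient.inductionOn₂ q q' (fun a b h => ?_)
    exact Quotient.sound (show radS h4 A a b by rw [hA]; exact h)
  · exact fun a => ⟨Quotient.mk _ a, rfl⟩

theorem nsClasses_radS (h4 : H4 R Sc) (A : SAct S) :
    nsClasses A (radS h4 A) = sysOf h4 A := by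
  have hsys := sysOf_isSystem h4 A
  ext C
  constructor
  · rintro ⟨⟨a, rfl⟩, hnt⟩
    by_cases hmem : ∃ D ∈ sysOf h4 A, a ∈ D
    · obtain ⟨D, hD, haD⟩ := hmem
      have : {x | radS h4 A x a} = D := by
        ext x
        constructor
        · rintro (rfl | ⟨C', hC', hxC', haC'⟩)
          · exact haD
          · rwa [system_eq_of_mem hsys hC' hD haC' haD] at hxC'
        · exact fun hx => Or.inr ⟨D, hD, hx, haD⟩
      rwa [this]
    · push_neg at hmem
      exfalso
      apply hnt
      intro x hx y hy
      rcases hx with rfl | ⟨C', hC', _, haC'⟩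
      · rcases hy with rfl | ⟨C', hC', _, haC'⟩
        · rfl
        · exact absurd haC' (hmem C' hC')
      · exact absurd haC' (hmem C' hC')
  · intro hC
    obtain ⟨a, ha, b, hb, hab⟩ := Set.not_subsingleton_iff.mp (hsys.1 C hC).2
    refine ⟨⟨a, ?_⟩, (hsys.1 C hC).2⟩
    ext x
    constructor
    · exact fun hx => Or.inr ⟨C, hC, hx, ha⟩
    · rintro (rfl | ⟨C', hC', hxC', haC'⟩)
      · exact ha
      · rwa [system_eq_of_mem hsys hC' hC haC' ha] at hxC'

theorem radS_functorial
    (h1 : ∀ A : SAct S, A ∈ R → A ∈ Sc → Subsingleton A.carrier)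
    (h2 : ∀ A ∈ R, ∀ B : SAct S, ∀ f : A.carrier → B.carrier,
      IsHom A B f → Function.Surjective f → B ∈ R)
    (h3 : ∀ A ∈ Sc, ∀ (B : Set A.carrier) (h : IsSubact A B), A.sub B h ∈ Sc)
    (h4 : H4 R Sc) {A B : SAct S} (f : A.carrier → B.carrier) (hf : IsHom A B f)
    (a a' : A.carrier) (h : radS h4 A a a') : radS h4 B (f a) (f a') := by
  rcases h with rfl | ⟨D, hD, haD, haD'⟩
  · exact Or.inl rfl
  have hsys := sysOf_isSystem h4 A
  have hDsub := (hsys.1 D hD).1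
  have hDR : A.sub D hDsub ∈ R := sysOf_memR h4 A D hD hDsub
  by_cases himgss : (f '' D).Subsingleton
  · exact Or.inl (himgss ⟨a, haD, rfl⟩ ⟨a', haD', rfl⟩)
  · obtain ⟨C, hC, hsubC⟩ := subset_sysOf h1 h2 h3 h4 B (image_isSubact hf hDsub) himgss
      (image_memR h2 hf hDsub hDR)
    exact Or.inr ⟨C, hC, hsubC ⟨a, haD, rfl⟩, hsubC ⟨a', haD', rfl⟩⟩

end KAConstruction

theorem pair_conditions_give_KA_radical (S : Type u) [Monoid S]
    (R Sc : Set (SAct S))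
    (hRiso : ∀ A B : SAct S, AreIso A B → A ∈ R → B ∈ R)
    (hSiso : ∀ A B : SAct S, AreIso A B → A ∈ Sc → B ∈ Sc)
    (hRtriv : ∀ A : SAct S, Subsingleton A.carrier → A ∈ R)
    (hStriv : ∀ A : SAct S, Subsingleton A.carrier → A ∈ Sc)
    (h1 : ∀ A : SAct S, A ∈ R → A ∈ Sc → Subsingleton A.carrier)
    (h2 : ∀ A ∈ R, ∀ B : SAct S, ∀ f : A.carrier → B.carrier,
      IsHom A B f → Function.Surjective f → B ∈ R)
    (h3 : ∀ A ∈ Sc, ∀ (B : Set A.carrier) (h : IsSubact A B), A.sub B h ∈ Sc)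
    (h4 : ∀ A : SAct S, ∃ (Sys : Set (Set A.carrier)) (hSys : IsSystem A Sys),
      (∀ B ∈ Sys, ∀ h : IsSubact A B, A.sub B h ∈ R) ∧
      A.quot (reesSetoid A Sys hSys) (reesSetoid_isActCon A Sys hSys) ∈ Sc) :
    ∃ r : KARadical S,
      r.toHoehnkeRadical.radClass = R ∧ r.toHoehnkeRadical.ssClass = Sc := by
  have h4' : H4 R Sc := h4
  refine ⟨{
    rad := radS h4'
    isCon := radS_isCon h4'
    functorial := fun {A B} f hf a a' h => radS_functorial h1 h2 h3 h4' f hf a a' h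
    rad_quot := fun A => radS_eq_bot_of_memSc h1 h3 h4' (sysOf_quot h4' A)
    rees := fun A => ⟨sysOf h4' A, sysOf_isSystem h4' A, rfl⟩
    cls_rad := fun A B hB h => by
      rw [nsClasses_radS h4' A] at hB
      exact radS_eq_top_of_memR h1 h2 h4' (sysOf_memR h4' A B hB h)
    maximal := fun A Sys hSys hmem B hB => by
      have hsub := (hSys.1 B hB).1
      have hnt := (hSys.1 B hB).2
      have hR : A.sub B hsub ∈ R := memR_of_radS_eq_top hRiso hRtriv h4' (hmem B hB hsub)
      obtain ⟨C, hC, hsubC⟩ := subset_sysOf h1 h2 h3 h4' A hsub hnt hR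
      exact ⟨C, (nsClasses_radS h4' A).symm ▸ hC, hsubC⟩ }, ?_, ?_⟩
  · ext A
    exact ⟨fun h => memR_of_radS_eq_top hRiso hRtriv h4' h,
      fun h => radS_eq_top_of_memR h1 h2 h4' h⟩
  · ext A
    exact ⟨fun h => memSc_of_radS_eq_bot hSiso h4' h,
      fun h => radS_eq_bot_of_memSc h1 h3 h4' h⟩
end

section
/- Let S be a monoid and let (R, S) be a pair of classes of S-acts, each closed under isomorphism and containing all trivial acts, satisfying: (1) R ∩ S consists of trivial S-acts; (2) R is homomorphically closed; (3) S is closed under subacts; (4) every S-act A admits a system Σ of pairwise disjoint non-trivial subacts all belonging to R such that the Rees factor A/ρ_Σ belongs to S. Then R has the inductive property: the union of every ascending chain of subacts of an S-act, all belonging to R, belongs to R. -/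
universe u

open SAct

theorem pair_conditions_inductive_property (S : Type u) [Monoid S]
    (R Sc : Set (SAct S))
    (hRiso : ∀ A B : SAct S, AreIso A B → A ∈ R → B ∈ R)
    (hSiso : ∀ A B : SAct S, AreIso A B → A ∈ Sc → B ∈ Sc)
    (hRtriv : ∀ A : SAct S, Subsingleton A.carrier → A ∈ R)
    (hStriv : ∀ A : SAct S, Subsingleton A.carrier → A ∈ Sc)
    (h1 : ∀ A : SAct S, A ∈ R → A ∈ Sc → Subsingleton A.carrier)
    (h2 : ∀ A ∈ R, ∀ B : SAct S, ∀ f : A.carrier → B.carrier,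
      IsHom A B f → Function.Surjective f → B ∈ R)
    (h3 : ∀ A ∈ Sc, ∀ (B : Set A.carrier) (h : IsSubact A B), A.sub B h ∈ Sc)
    (h4 : ∀ A : SAct S, ∃ (Sys : Set (Set A.carrier)) (hSys : IsSystem A Sys),
      (∀ B ∈ Sys, ∀ h : IsSubact A B, A.sub B h ∈ R) ∧
      A.quot (reesSetoid A Sys hSys) (reesSetoid_isActCon A Sys hSys) ∈ Sc)
    (A : SAct S) (ι : Type u) [Nonempty ι] [LinearOrder ι]
    (B : ι → Set A.carrier) (hchain : Monotone B)
    (hBsub : ∀ i, IsSubact A (B i))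
    (hBR : ∀ i, ∀ h : IsSubact A (B i), A.sub (B i) h ∈ R)
    (h : IsSubact A (⋃ i, B i)) :
    A.sub (⋃ i, B i) h ∈ R := by
  set AU := A.sub (⋃ i, B i) h with hAUdef
  obtain ⟨Sys, hSys, hRSys, hQSc⟩ := h4 AU
  set ρ := reesSetoid AU Sys hSys with hρdef
  set Q := AU.quot ρ (reesSetoid_isActCon AU Sys hSys) with hQdef
  -- The quotient Q is a subsingleton
  have hQsub : ∀ q1 q2 : Q.carrier, q1 = q2 := by
    intro q1 q2
    obtain ⟨u1, rfl⟩ := Quotient.exists_rep q1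
    obtain ⟨u2, rfl⟩ := Quotient.exists_rep q2
    obtain ⟨i, hi⟩ := Set.mem_iUnion.mp u1.2
    obtain ⟨j, hj⟩ := Set.mem_iUnion.mp u2.2
    have h1k : u1.1 ∈ B (max i j) := hchain (le_max_left i j) hi
    have h2k : u2.1 ∈ B (max i j) := hchain (le_max_right i j) hj
    set k := max i j
    set f : (A.sub (B k) (hBsub k)).carrier → Q.carrier :=
      fun b => Quotient.mk ρ ⟨b.1, Set.mem_iUnion.mpr ⟨k, b.2⟩⟩ with hf
    have hfhom : IsHom (A.sub (B k) (hBsub k)) Q f := by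
      intro s b; rfl
    have him : IsSubact Q (Set.range f) := by
      rintro s _ ⟨b, rfl⟩
      exact ⟨s • b, hfhom s b⟩
    set g : (A.sub (B k) (hBsub k)).carrier → (Q.sub (Set.range f) him).carrier :=
      fun b => ⟨f b, ⟨b, rfl⟩⟩ with hg
    have hghom : IsHom (A.sub (B k) (hBsub k)) (Q.sub (Set.range f) him) g := by
      intro s b
      exact Subtype.ext (hfhom s b)
    have hgsurj : Function.Surjective g := by
      rintro ⟨_, b, rfl⟩
      exact ⟨b, rfl⟩
    have hmemR : Q.sub (Set.range f) him ∈ R :=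
      h2 _ (hBR k (hBsub k)) _ g hghom hgsurj
    have hmemS : Q.sub (Set.range f) him ∈ Sc := h3 Q hQSc _ him
    have hss : Subsingleton (Q.sub (Set.range f) him).carrier := h1 _ hmemR hmemS
    have e1 : Quotient.mk ρ u1 = f ⟨u1.1, h1k⟩ := by
      exact congrArg (Quotient.mk ρ) (Subtype.ext rfl)
    have e2 : Quotient.mk ρ u2 = f ⟨u2.1, h2k⟩ := by
      exact congrArg (Quotient.mk ρ) (Subtype.ext rfl)
    have := @Subsingleton.elim _ hss
      ⟨f ⟨u1.1, h1k⟩, ⟨⟨u1.1, h1k⟩, rfl⟩⟩ ⟨f ⟨u2.1, h2k⟩, ⟨⟨u2.1, h2k⟩, rfl⟩⟩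
    rw [e1, e2]
    exact congrArg Subtype.val this

  by_cases hAUss : Subsingleton AU.carrier
  · exact hRtriv AU hAUss
  · obtain ⟨a, b, hab⟩ := (not_subsingleton_iff_nontrivial.mp hAUss).exists_pair_ne
    have hrab : ρ.r a b := Quotient.exact (hQsub (Quotient.mk ρ a) (Quotient.mk ρ b))
    rcases hrab with heq | ⟨C, hC, haC, hbC⟩
    · exact absurd heq hab
    · have hCuniv : ∀ x : AU.carrier, x ∈ C := by
        intro x
        have hrxa : ρ.r x a := Quotient.exact (hQsub (Quotient.mk ρ x) (Quotient.mk ρ a))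
        rcases hrxa with rfl | ⟨D, hD, hxD, haD⟩
        · exact haC
        · by_cases hDC : D = C
          · exact hDC ▸ hxD
          · exact absurd haC (hSys.2 D hD C hC hDC a haD)
      have hCsub : IsSubact AU C := (hSys.1 C hC).1
      have hCR : AU.sub C hCsub ∈ R := hRSys C hC hCsub
      refine hRiso (AU.sub C hCsub) AU ⟨Subtype.val, fun s x => rfl, ?_, ?_⟩ hCR
      · exact Subtype.val_injective
      · exact fun x => ⟨⟨x, hCuniv x⟩, rfl⟩
end

section
/- Let S be a monoid and let (R, S) be a pair of classes of S-acts, each closed under isomorphism and containing all trivial acts, satisfying: (1) R ∩ S consists of trivial S-acts; (2) R is homomorphically closed; (3) S is closed under subacts; (4) every S-act A admits a system Σ of pairwise disjoint non-trivial subacts all belonging to R such that the Rees factor A/ρ_Σ belongs to S. Then R is closed under Rees extensions: if χ is a Rees congruence on an S-act A with A/χ ∈ R and every member of Σ_χ belongs to R, then A ∈ R. -/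
universe u

open SAct

/-!
Take a system `Σ` for `A` as in (4), with `A/ρ_Σ ∈ S`. Each non-singleton class of `χ` lies
in `R`, so its image in `A/ρ_Σ` is in `R` by (2) and in `S` by (3), hence trivial by (1): thus
`χ ≤ ρ_Σ`. Then `A/ρ_Σ` is a homomorphic image of `A/χ ∈ R`, so it is trivial as well, i.e.
`ρ_Σ = ∇_A`; unless `A` is trivial, this forces `A ∈ Σ ⊆ R`.
-/

namespace SAct

variable {S : Type u} [Monoid S]

def HomClosed (R : Set (SAct S)) : Prop :=
  ∀ A ∈ R, ∀ B : SAct S, ∀ f : A.carrier → B.carrier, IsHom A B f → Function.Surjective f → B ∈ R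

def SubactClosed (C : Set (SAct S)) : Prop :=
  ∀ A ∈ C, ∀ (B : Set A.carrier) (h : IsSubact A B), A.sub B h ∈ C

theorem isHom_quotient_mk (A : SAct S) (ρ : Setoid A.carrier) (h : IsActCon A ρ) :
    IsHom A (A.quot ρ h) (Quotient.mk ρ) :=
  fun _ _ => rfl

theorem isHom_subtype_val (A : SAct S) (B : Set A.carrier) (h : IsSubact A B) :
    IsHom (A.sub B h) A Subtype.val :=
  fun _ _ => rfl

theorem isHom_map_of_le (A : SAct S) {χ ρ : Setoid A.carrier} (hχ : IsActCon A χ)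
    (hρ : IsActCon A ρ) (hle : χ ≤ ρ) :
    IsHom (A.quot χ hχ) (A.quot ρ hρ) (Setoid.map_of_le hle) := by
  intro s q
  induction q using Quotient.ind
  rfl

theorem _root_.Setoid.map_of_le_surjective {α : Type*} {χ ρ : Setoid α} (hle : χ ≤ ρ) :
    Function.Surjective (Setoid.map_of_le hle) :=
  Quotient.ind fun a => ⟨Quotient.mk χ a, rfl⟩

theorem IsSubact.image {A B : SAct S} {f : A.carrier → B.carrier} (hf : IsHom A B f)
    {C : Set A.carrier} (hC : IsSubact A C) : IsSubact B (f '' C) := by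
  rintro s _ ⟨x, hx, rfl⟩
  exact ⟨s • x, hC s x hx, hf s x⟩

theorem HomClosed.sub_image_mem {R : Set (SAct S)} (hR : HomClosed R) {A B : SAct S}
    {f : A.carrier → B.carrier} (hf : IsHom A B f) {C : Set A.carrier} (hC : IsSubact A C)
    (hCR : A.sub C hC ∈ R) : B.sub (f '' C) (hC.image hf) ∈ R := by
  refine hR _ hCR _ (fun x => ⟨f x.1, x.1, x.2, rfl⟩) (fun s x => Subtype.ext (hf s x.1)) ?_
  rintro ⟨_, x, hx, rfl⟩
  exact ⟨⟨x, hx⟩, rfl⟩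

theorem image_subsingleton_of_mem {R Sc : Set (SAct S)}
    (hRS : ∀ A : SAct S, A ∈ R → A ∈ Sc → Subsingleton A.carrier) (hR : HomClosed R)
    (hSc : SubactClosed Sc) {A Q : SAct S} {f : A.carrier → Q.carrier} (hf : IsHom A Q f)
    (hQ : Q ∈ Sc) {B : Set A.carrier} (hB : IsSubact A B) (hBR : A.sub B hB ∈ R) :
    (f '' B).Subsingleton := by
  have htriv := hRS _ (hR.sub_image_mem hf hB hBR) (hSc Q hQ _ (hB.image hf))
  intro x hx y hy
  exact congrArg Subtype.val (htriv.elim ⟨x, hx⟩ ⟨y, hy⟩)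

theorem IsSystem.eq_of_mem {A : SAct S} {Sys : Set (Set A.carrier)} (hSys : IsSystem A Sys)
    {B C : Set A.carrier} (hB : B ∈ Sys) (hC : C ∈ Sys) {a : A.carrier} (haB : a ∈ B)
    (haC : a ∈ C) : B = C :=
  by_contra fun hBC => hSys.2 B hB C hC hBC a haB haC

theorem IsRees.le_of_forall_nsClasses {A : SAct S} {χ ρ : Setoid A.carrier} (hχ : IsRees A χ)
    (h : ∀ B ∈ nsClasses A χ, IsSubact A B → ∀ a ∈ B, ∀ b ∈ B, ρ a b) : χ ≤ ρ := by
  obtain ⟨Sys, hSys, rfl⟩ := hχ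
  rintro a b (rfl | ⟨B, hB, ha, hb⟩)
  · exact ρ.refl a
  · exact h B ⟨⟨a, (reesSetoid_class_eq hSys hB ha).symm⟩, (hSys.1 B hB).2⟩ (hSys.1 B hB).1
      a ha b hb

theorem univ_mem_of_reesSetoid_eq_top {A : SAct S} [Nontrivial A.carrier]
    {Sys : Set (Set A.carrier)} {hSys : IsSystem A Sys} (h : reesSetoid A Sys hSys = ⊤) :
    Set.univ ∈ Sys := by
  obtain ⟨a, b, hab⟩ := exists_pair_ne A.carrier
  have hrel : ∀ x y, reesSetoid A Sys hSys x y := fun x y => h ▸ trivial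
  obtain rfl | ⟨B, hB, ha, -⟩ := hrel a b
  · exact absurd rfl hab
  · rw [← Set.eq_univ_of_forall fun x => (reesSetoid_class_eq hSys hB ha).subset (hrel x a)]
    exact hB

end SAct

theorem pair_conditions_rees_extension_closed_general (S : Type u) [Monoid S]
    (R Sc : Set (SAct S))
    (hRtriv : ∀ A : SAct S, Subsingleton A.carrier → A ∈ R)
    (h1 : ∀ A : SAct S, A ∈ R → A ∈ Sc → Subsingleton A.carrier)
    (h2 : ∀ A ∈ R, ∀ B : SAct S, ∀ f : A.carrier → B.carrier,
      IsHom A B f → Function.Surjective f → B ∈ R)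
    (h3 : ∀ A ∈ Sc, ∀ (B : Set A.carrier) (h : IsSubact A B), A.sub B h ∈ Sc)
    (h4 : ∀ A : SAct S, ∃ (Sys : Set (Set A.carrier)) (hSys : IsSystem A Sys),
      (∀ B ∈ Sys, ∀ h : IsSubact A B, A.sub B h ∈ R) ∧
      A.quot (reesSetoid A Sys hSys) (reesSetoid_isActCon A Sys hSys) ∈ Sc)
    (A : SAct S) (χ : Setoid A.carrier) (hrees : IsRees A χ) (hc : IsActCon A χ)
    (hquot : A.quot χ hc ∈ R)
    (hcls : ∀ B ∈ nsClasses A χ, ∀ h : IsSubact A B, A.sub B h ∈ R) :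
    A ∈ R := by
  obtain ⟨Sys, hSys, hSysR, hQSc⟩ := h4 A
  set ρ := reesSetoid A Sys hSys
  have hρ := reesSetoid_isActCon A Sys hSys
  have hle : χ ≤ ρ := hrees.le_of_forall_nsClasses fun B hB hBsub a ha b hb =>
    Quotient.exact <| image_subsingleton_of_mem h1 h2 h3 (isHom_quotient_mk A ρ hρ) hQSc hBsub
      (hcls B hB hBsub) ⟨a, ha, rfl⟩ ⟨b, hb, rfl⟩
  have hQR : A.quot ρ hρ ∈ R :=
    h2 _ hquot _ _ (isHom_map_of_le A hc hρ hle) (Setoid.map_of_le_surjective hle)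
  have hρ_top : ρ = ⊤ := Quotient.subsingleton_iff.1 (h1 _ hQR hQSc)
  rcases subsingleton_or_nontrivial A.carrier with hA | hA
  · exact hRtriv A hA
  have huniv := univ_mem_of_reesSetoid_eq_top hρ_top
  exact h2 _ (hSysR _ huniv (hSys.1 _ huniv).1) A Subtype.val (isHom_subtype_val A _ _)
    fun x => ⟨⟨x, trivial⟩, rfl⟩

theorem pair_conditions_rees_extension_closed (S : Type u) [Monoid S]
    (R Sc : Set (SAct S))
    (hRiso : ∀ A B : SAct S, AreIso A B → A ∈ R → B ∈ R)
    (hSiso : ∀ A B : SAct S, AreIso A B → A ∈ Sc → B ∈ Sc)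
    (hRtriv : ∀ A : SAct S, Subsingleton A.carrier → A ∈ R)
    (hStriv : ∀ A : SAct S, Subsingleton A.carrier → A ∈ Sc)
    (h1 : ∀ A : SAct S, A ∈ R → A ∈ Sc → Subsingleton A.carrier)
    (h2 : ∀ A ∈ R, ∀ B : SAct S, ∀ f : A.carrier → B.carrier,
      IsHom A B f → Function.Surjective f → B ∈ R)
    (h3 : ∀ A ∈ Sc, ∀ (B : Set A.carrier) (h : IsSubact A B), A.sub B h ∈ Sc)
    (h4 : ∀ A : SAct S, ∃ (Sys : Set (Set A.carrier)) (hSys : IsSystem A Sys),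
      (∀ B ∈ Sys, ∀ h : IsSubact A B, A.sub B h ∈ R) ∧
      A.quot (reesSetoid A Sys hSys) (reesSetoid_isActCon A Sys hSys) ∈ Sc)
    (A : SAct S) (χ : Setoid A.carrier) (hrees : IsRees A χ) (hc : IsActCon A χ)
    (hquot : A.quot χ hc ∈ R)
    (hcls : ∀ B ∈ nsClasses A χ, ∀ h : IsSubact A B, A.sub B h ∈ R) :
    A ∈ R :=
  pair_conditions_rees_extension_closed_general S R Sc hRtriv h1 h2 h3 h4 A χ hrees hc hquot hcls
end

section
/- Let S be a monoid and let C be a class of S-acts closed under isomorphism, containing all trivial acts, and closed under subacts and products. Then the class R_{r_C} = {A : r_C(A) = ∇_A} is homomorphically closed: every homomorphic image of a member of R_{r_C} belongs to R_{r_C}. -/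
universe u

open SAct

theorem radC_radical_class_hom_closed (S : Type u) [Monoid S]
    (C : Set (SAct S))
    (hiso : ∀ A B : SAct S, AreIso A B → A ∈ C → B ∈ C)
    (htriv : ∀ A : SAct S, Subsingleton A.carrier → A ∈ C)
    (hsub : ∀ A ∈ C, ∀ (B : Set A.carrier) (h : IsSubact A B), A.sub B h ∈ C)
    (hprod : ∀ (ι : Type u) (f : ι → SAct S), (∀ i, f i ∈ C) → prodAct ι f ∈ C)
    (A : SAct S) (hA : A ∈ RradC C) (B : SAct S) (f : A.carrier → B.carrier)
    (hf : IsHom A B f) (hsurj : Function.Surjective f) :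
    B ∈ RradC C := by
  have hA' : ∀ χ ∈ {χ : Setoid A.carrier | ∃ h : IsActCon A χ, A.quot χ h ∈ C},
      χ = (⊤ : Setoid A.carrier) := by
    intro χ hχ
    have h1 : radC C A ≤ χ := sInf_le hχ
    have h2 : radC C A = ⊤ := hA
    exact top_le_iff.mp (h2 ▸ h1)
  show radC C B = ⊤
  rw [radC, eq_top_iff]
  refine le_sInf ?_
  rintro χ ⟨hχcon, hquot⟩
  -- pull back χ along f
  set χ' : Setoid A.carrier := Setoid.comap f χ with hχ'def
  have hrel : ∀ a a' : A.carrier, χ' a a' ↔ χ (f a) (f a') := fun _ _ => Iff.rfl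
  have hχ'con : IsActCon A χ' := by
    intro s a a' h
    rw [hrel] at h ⊢
    rw [hf, hf]
    exact hχcon s _ _ h
  -- the map from B.quot χ to A.quot χ' via a section of f
  let g : (B.quot χ hχcon).carrier → (A.quot χ' hχ'con).carrier :=
    Quotient.map (Function.surjInv hsurj) (by
      intro b b' hbb'
      show χ (f (Function.surjInv hsurj b)) (f (Function.surjInv hsurj b'))
      rw [Function.surjInv_eq hsurj, Function.surjInv_eq hsurj]
      exact hbb')
  have hg : IsHom (B.quot χ hχcon) (A.quot χ' hχ'con) g := by
    intro s q
    induction q using Quotient.inductionOn with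
    | h b =>
      show Quotient.mk χ' (Function.surjInv hsurj (s • b))
          = Quotient.mk χ' (s • Function.surjInv hsurj b)
      refine Quotient.sound ?_
      show χ (f (Function.surjInv hsurj (s • b))) (f (s • Function.surjInv hsurj b))
      rw [Function.surjInv_eq hsurj, hf, Function.surjInv_eq hsurj]
  have hgbij : Function.Bijective g := by
    constructor
    · intro q q'
      induction q using Quotient.inductionOn with
      | h b =>
        induction q' using Quotient.inductionOn with
        | h b' =>
          intro h
          refine Quotient.sound ?_
          have h2 := Quotient.exact h
          have : χ (f (Function.surjInv hsurj b)) (f (Function.surjInv hsurj b')) := h2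
          rw [Function.surjInv_eq hsurj, Function.surjInv_eq hsurj] at this
          exact this
    · intro q
      induction q using Quotient.inductionOn with
      | h a =>
        refine ⟨Quotient.mk χ (f a), Quotient.sound ?_⟩
        show χ (f (Function.surjInv hsurj (f a))) (f a)
        rw [Function.surjInv_eq hsurj]
  have hmem : A.quot χ' hχ'con ∈ C :=
    hiso (B.quot χ hχcon) (A.quot χ' hχ'con) ⟨g, hg, hgbij⟩ hquot
  have hχ'top : χ' = (⊤ : Setoid A.carrier) := hA' χ' ⟨hχ'con, hmem⟩
  intro b b' _
  obtain ⟨a, rfl⟩ := hsurj b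
  obtain ⟨a', rfl⟩ := hsurj b'
  have : χ' a a' := hχ'top ▸ (trivial : (⊤ : Setoid A.carrier) a a')
  exact (hrel a a').mp this
end

section
/- Let S be a monoid and let C be a class of S-acts closed under isomorphism, containing all trivial acts, and closed under subacts and products. Then the class R_{r_C} = {A : r_C(A) = ∇_A} has the inductive property: for every ascending chain {A_i} of subacts of an S-act with all A_i ∈ R_{r_C}, the union ⋃ A_i belongs to R_{r_C}. -/
universe u

open SAct

universe v

lemma areIso_symm_aux {S' : Type v} [Monoid S'] {A B : SAct S'} (f : A.carrier → B.carrier)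
    (hf : SAct.IsHom A B f) (hb : Function.Bijective f) : SAct.AreIso B A := by
  let e := Equiv.ofBijective f hb
  refine ⟨e.symm, ?_, e.symm.bijective⟩
  intro s b
  apply hb.injective
  have h1 : ∀ x, f (e.symm x) = x := fun x => e.apply_symm_apply x
  rw [h1, hf, h1]


theorem radC_radical_class_inductive (S : Type u) [Monoid S]
    (C : Set (SAct S))
    (hiso : ∀ A B : SAct S, AreIso A B → A ∈ C → B ∈ C)
    (htriv : ∀ A : SAct S, Subsingleton A.carrier → A ∈ C)
    (hsub : ∀ A ∈ C, ∀ (B : Set A.carrier) (h : IsSubact A B), A.sub B h ∈ C)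
    (hprod : ∀ (ι : Type u) (f : ι → SAct S), (∀ i, f i ∈ C) → prodAct ι f ∈ C)
    (A : SAct S) (ι : Type u) [Nonempty ι] [LinearOrder ι]
    (B : ι → Set A.carrier) (hchain : Monotone B)
    (hBsub : ∀ i, IsSubact A (B i))
    (hBR : ∀ i, ∀ h : IsSubact A (B i), A.sub (B i) h ∈ RradC C)
    (h : IsSubact A (⋃ i, B i)) :
    A.sub (⋃ i, B i) h ∈ RradC C := by
  rw [RradC, Set.mem_setOf_eq, radC, sInf_eq_top]
  rintro χ ⟨hχ, hquot⟩
  rw [Setoid.eq_top_iff]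
  rintro ⟨a, ha⟩ ⟨b, hb⟩
  obtain ⟨i, hai⟩ := Set.mem_iUnion.1 ha
  obtain ⟨j, hbj⟩ := Set.mem_iUnion.1 hb
  have haK : a ∈ B (max i j) := hchain (le_max_left i j) hai
  have hbK : b ∈ B (max i j) := hchain (le_max_right i j) hbj
  let k := max i j
  let AU := A.sub (⋃ i, B i) h
  let AK := A.sub (B k) (hBsub k)
  let incl : AK.carrier → AU.carrier := fun x => ⟨x.1, Set.mem_iUnion.2 ⟨k, x.2⟩⟩
  have hincl_smul : ∀ (s : S) (x : AK.carrier), incl (s • x) = s • incl x :=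
    fun s x => Subtype.ext rfl
  let χ' : Setoid AK.carrier :=
    ⟨fun x y => χ (incl x) (incl y),
     ⟨fun x => χ.refl _, fun hxy => χ.symm hxy, fun hxy hyz => χ.trans hxy hyz⟩⟩
  have hχ' : SAct.IsActCon AK χ' := by
    intro s x y hxy
    show χ (incl (s • x)) (incl (s • y))
    rw [hincl_smul, hincl_smul]
    exact hχ s _ _ hxy
  let Q := AU.quot χ hχ
  let D : Set Q.carrier := Set.range (fun x : AK.carrier => Quotient.mk χ (incl x))
  have hDsub : SAct.IsSubact Q D := by
    rintro s q ⟨x, rfl⟩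
    show (Quotient.map (fun a => s • a) _ (Quotient.mk χ (incl x))) ∈ D
    rw [Quotient.map_mk]
    exact ⟨s • x, congrArg (Quotient.mk χ) (hincl_smul s x)⟩
  have hDC : Q.sub D hDsub ∈ C := hsub Q hquot D hDsub
  let QK := AK.quot χ' hχ'
  let f : QK.carrier → (Q.sub D hDsub).carrier := fun q =>
    Quotient.liftOn q (fun x => (⟨Quotient.mk χ (incl x), ⟨x, rfl⟩⟩ : ↥D))
      (fun x y hxy => Subtype.ext (Quotient.sound hxy))
  have hfhom : SAct.IsHom QK (Q.sub D hDsub) f := by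
    intro s q
    refine Quotient.inductionOn q (fun x => ?_)
    exact Subtype.ext (congrArg (Quotient.mk χ) (hincl_smul s x))
  have hfbij : Function.Bijective f := by
    constructor
    · intro q1 q2 heq
      refine Quotient.inductionOn₂ q1 q2 (fun x y hxy => ?_) heq
      have h2 : (Quotient.mk χ (incl x)) = Quotient.mk χ (incl y) :=
        congrArg Subtype.val hxy
      have h3 : χ (incl x) (incl y) := Quotient.exact h2
      exact Quotient.sound h3
    · rintro ⟨d, x, rfl⟩
      exact ⟨Quotient.mk χ' x, rfl⟩
  have hQKC : QK ∈ C := hiso _ _ (areIso_symm_aux f hfhom hfbij) hDC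
  have hrad : radC C AK = ⊤ := hBR k (hBsub k)
  have hle : radC C AK ≤ χ' := sInf_le ⟨hχ', hQKC⟩
  rw [hrad] at hle
  have hrel : χ' ⟨a, haK⟩ ⟨b, hbK⟩ := by
    rw [Setoid.le_def] at hle
    exact hle trivial
  exact hrel
end

section
/- Let S be a monoid and let C be a class of S-acts closed under isomorphism, containing all trivial acts, and closed under subacts and products. Then the class R_{r_C} = {A : r_C(A) = ∇_A} is closed under Rees extensions: if ρ is a Rees congruence on an S-act A with A/ρ ∈ R_{r_C} and every member of Σ_ρ belongs to R_{r_C}, then A ∈ R_{r_C}. -/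
universe u

open SAct

theorem areIso_symm' {S : Type u} [Monoid S] {A B : SAct S} (h : AreIso A B) : AreIso B A := by
  obtain ⟨f, hf, hbij⟩ := h
  let e := Equiv.ofBijective f hbij
  refine ⟨e.symm, ?_, e.symm.bijective⟩
  intro s b
  apply hbij.injective
  show f (e.symm (s • b)) = f (s • e.symm b)
  rw [hf]
  show e (e.symm (s • b)) = s • e (e.symm b)
  simp

theorem radC_top_rel {S : Type u} [Monoid S] {C : Set (SAct S)} {A : SAct S}
    (hA : A ∈ RradC C) {χ : Setoid A.carrier} (h : IsActCon A χ)
    (hq : A.quot χ h ∈ C) : ∀ a b, χ a b := by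
  intro a b
  have h1 : radC C A ≤ χ := sInf_le ⟨h, hq⟩
  have h2 : (⊤ : Setoid A.carrier) ≤ χ := hA ▸ h1
  exact h2 trivial
theorem radC_radical_class_rees_extension_closed (S : Type u) [Monoid S]
    (C : Set (SAct S))
    (hiso : ∀ A B : SAct S, AreIso A B → A ∈ C → B ∈ C)
    (htriv : ∀ A : SAct S, Subsingleton A.carrier → A ∈ C)
    (hsub : ∀ A ∈ C, ∀ (B : Set A.carrier) (h : IsSubact A B), A.sub B h ∈ C)
    (hprod : ∀ (ι : Type u) (f : ι → SAct S), (∀ i, f i ∈ C) → prodAct ι f ∈ C)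
    (A : SAct S) (ρ : Setoid A.carrier) (hrees : IsRees A ρ) (hc : IsActCon A ρ)
    (hquot : A.quot ρ hc ∈ RradC C)
    (hcls : ∀ B ∈ nsClasses A ρ, ∀ h : IsSubact A B, A.sub B h ∈ RradC C) :
    A ∈ RradC C := by
  obtain ⟨Sys, hSys, rfl⟩ := hrees
  set ρ := reesSetoid A Sys hSys with hρ
  refine eq_top_iff.mpr (le_sInf ?_)
  rintro χ ⟨hχ, hqC⟩
  -- Step 1: χ relates all elements within any B ∈ Sys
  have step1 : ∀ B ∈ Sys, ∀ a ∈ B, ∀ b ∈ B, χ a b := by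
    intro B hBSys
    have hB : IsSubact A B := (hSys.1 B hBSys).1
    have hBns : ¬ B.Subsingleton := (hSys.1 B hBSys).2
    obtain ⟨a0, ha0, _⟩ := Set.not_subsingleton_iff.mp hBns
    have hclassEq : B = {x | ρ x a0} := by
      ext x
      constructor
      · intro hx
        exact Or.inr ⟨B, hBSys, hx, ha0⟩
      · rintro (rfl | ⟨D, hD, hxD, ha0D⟩)
        · exact ha0
        · by_cases hDB : D = B
          · exact hDB ▸ hxD
          · exact absurd ha0D (hSys.2 B hBSys D hD (Ne.symm hDB) a0 ha0)
    have hBns' : B ∈ nsClasses A ρ := ⟨⟨a0, hclassEq⟩, hBns⟩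
    have hBrad : A.sub B hB ∈ RradC C := hcls B hBns' hB
    -- restricted congruence on B
    let χB : Setoid ↥B :=
      ⟨fun b b' => χ b.1 b'.1,
        ⟨fun b => χ.refl' b.1, fun h => χ.symm' h, fun h1 h2 => χ.trans' h1 h2⟩⟩
    have hχB : IsActCon (A.sub B hB) χB := by
      intro s b b' h
      exact hχ s b.1 b'.1 h
    -- image of B in the quotient
    let D : Set (A.quot χ hχ).carrier := Quotient.mk χ '' B
    have hD : IsSubact (A.quot χ hχ) D := by
      rintro s q ⟨b, hb, rfl⟩
      exact ⟨s • b, hB s b hb, rfl⟩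
    have hDC : (A.quot χ hχ).sub D hD ∈ C := hsub _ hqC D hD
    -- iso between (sub B)/χB and sub D
    let f : Quotient χB → ↥D :=
      Quotient.lift (fun b : ↥B => (⟨Quotient.mk χ b.1, ⟨b.1, b.2, rfl⟩⟩ : ↥D))
        (fun b b' h => Subtype.ext (Quotient.sound h))
    have hiso1 : AreIso ((A.sub B hB).quot χB hχB) ((A.quot χ hχ).sub D hD) := by
      refine ⟨f, ?_, ?_, ?_⟩
      · intro s q
        induction q using Quotient.inductionOn with
        | h b => rfl
      · intro q q'
        induction q using Quotient.inductionOn with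
        | h b =>
          induction q' using Quotient.inductionOn with
          | h b' =>
            intro h
            have h2 : Quotient.mk χ b.1 = Quotient.mk χ b'.1 := congrArg Subtype.val h
            have h3 : χ b.1 b'.1 := Quotient.exact h2
            exact Quotient.sound h3
      · rintro ⟨q, b, hb, rfl⟩
        exact ⟨Quotient.mk χB ⟨b, hb⟩, rfl⟩
    have hqBC : (A.sub B hB).quot χB hχB ∈ C :=
      hiso _ _ (areIso_symm' hiso1) hDC
    have := radC_top_rel hBrad hχB hqBC
    intro a ha b hb
    exact this ⟨a, ha⟩ ⟨b, hb⟩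
  -- ρ ≤ χ
  have hle : ∀ a b, ρ a b → χ a b := by
    rintro a b (rfl | ⟨B, hBSys, ha, hb⟩)
    · exact χ.refl' a
    · exact step1 B hBSys a ha b hb
  -- induced congruence on A/ρ
  have hwd : ∀ (a₁ b₁ a₂ b₂ : A.carrier), ρ a₁ a₂ → ρ b₁ b₂ →
      (χ a₁ b₁) = (χ a₂ b₂) := by
    intro a₁ b₁ a₂ b₂ h1 h2
    exact propext ⟨fun h => χ.trans' (χ.symm' (hle _ _ h1)) (χ.trans' h (hle _ _ h2)),
      fun h => χ.trans' (hle _ _ h1) (χ.trans' h (χ.symm' (hle _ _ h2)))⟩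
  let χ' : Setoid (Quotient ρ) :=
    ⟨fun q q' => Quotient.liftOn₂ q q' (fun a b => χ a b) hwd,
      ⟨fun q => Quotient.inductionOn q (fun a => χ.refl' a),
        fun {q q'} => Quotient.inductionOn₂ q q' (fun a b h => χ.symm' h),
        fun {q q' q''} => Quotient.inductionOn₃ q q' q''
          (fun a b c h1 h2 => χ.trans' h1 h2)⟩⟩
  have hχ' : IsActCon (A.quot ρ hc) χ' := by
    intro s q q'
    induction q using Quotient.inductionOn with
    | h a =>
      induction q' using Quotient.inductionOn with
      | h b =>
        intro h
        exact hχ s a b h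
  -- (A/ρ)/χ' ≅ A/χ
  let g : Quotient χ → Quotient χ' :=
    Quotient.lift (fun a => Quotient.mk χ' (Quotient.mk ρ a))
      (fun a b h => Quotient.sound (show χ' (Quotient.mk ρ a) (Quotient.mk ρ b) from h))
  have hiso2 : AreIso (A.quot χ hχ) ((A.quot ρ hc).quot χ' hχ') := by
    refine ⟨g, ?_, ?_, ?_⟩
    · intro s q
      induction q using Quotient.inductionOn with
      | h a => rfl
    · intro q q'
      induction q using Quotient.inductionOn with
      | h a =>
        induction q' using Quotient.inductionOn with
        | h b =>
          intro h
          exact Quotient.sound (Quotient.exact h : χ' (Quotient.mk ρ a) (Quotient.mk ρ b))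
    · intro q
      induction q using Quotient.inductionOn with
      | h qa =>
        induction qa using Quotient.inductionOn with
        | h a => exact ⟨Quotient.mk χ a, rfl⟩
  have hqqC : (A.quot ρ hc).quot χ' hχ' ∈ C := hiso _ _ hiso2 hqC
  have hall := radC_top_rel hquot hχ' hqqC
  intro a b _
  exact hall (Quotient.mk ρ a) (Quotient.mk ρ b)
end
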